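/- For every integer n ≥ 2 there exists a school choice problem P with n students and n schools, each of quota 1 (every student ranking all n schools above the null school), such that: (i) DA(P) is the unique stable matching of P and is Pareto-efficient; (ii) Σ_{i∈I} rk_i(DA_i(P)) = n(n+1)/2; and (iii) there exists a Pareto-efficient matching μ of P with Σ_{i∈I} rk_i(μ(i)) = n + 1. Consequently, every stable-dominating matching ν of P satisfies Σ_{i∈I} rk_i(ν(i)) = n(n+1)/2, so the rank-inefficiency ratio of any stable-dominating and Pareto-efficient mechanism attains n/2. -/

import Mathlib

/-!
A school choice problem: finitely many students `I` and schools `S`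
(with a distinguished null school of quota `|I|`).  Each student `i` has a
strict preference over schools represented by its rank function
`rk i : S → ℕ` (a bijection onto `{1, …, |S|}`, where rank 1 is the most
preferred school); each school `s` has a quota `quota s ≥ 1` and a strict
priority over students represented by `prio s : I → ℕ`
(`i ▷_s j` iff `prio s i < prio s j`).
-/
structure SchoolChoice (I S : Type) [Fintype I] [Fintype S]
    [DecidableEq I] [DecidableEq S] where
  nullSchool : S
  quota : S → ℕ
  rk : I → S → ℕ
  prio : S → I → ℕ
  quota_pos : ∀ s : S, 1 ≤ quota s
  quota_null : quota nullSchool = Fintype.card I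
  rk_inj : ∀ i : I, Function.Injective (rk i)
  rk_mem : ∀ (i : I) (s : S), rk i s ∈ Finset.Icc 1 (Fintype.card S)
  prio_inj : ∀ s : S, Function.Injective (prio s)

namespace SchoolChoice

open scoped Classical

variable {I S : Type} [Fintype I] [Fintype S] [DecidableEq I] [DecidableEq S]

/-- `μ` is a matching: no school is assigned more students than its quota. -/
def IsMatching (P : SchoolChoice I S) (μ : I → S) : Prop :=
  ∀ s : S, (Finset.univ.filter fun i => μ i = s).card ≤ P.quota s

/-- Given the sets `R i` of schools that have rejected student `i` so far,
student `i` proposes to her most preferred school that has not rejected her. -/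
noncomputable def propose (P : SchoolChoice I S) (R : I → Finset S) (i : I) : S :=
  if h : (Finset.univ \ R i).Nonempty then
    (Finset.exists_min_image (Finset.univ \ R i) (P.rk i) h).choose
  else P.nullSchool

/-- At the DA round with rejection state `R`, school `s` rejects student `i`:
`i` applies to `s` and at least `quota s` applicants to `s` have higher priority. -/
def rejectsAt (P : SchoolChoice I S) (R : I → Finset S) (s : S) (i : I) : Prop :=
  P.propose R i = s ∧
    P.quota s ≤ (Finset.univ.filter fun j =>
      P.propose R j = s ∧ P.prio s j < P.prio s i).card

/-- One round of student-proposing Deferred Acceptance: record new rejections. -/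
noncomputable def stepR (P : SchoolChoice I S) (R : I → Finset S) : I → Finset S :=
  fun i => R i ∪ (Finset.univ.filter fun s => P.rejectsAt R s i)

/-- Rejection state after `n` rounds of Deferred Acceptance. -/
noncomputable def daR (P : SchoolChoice I S) : ℕ → I → Finset S
  | 0 => fun _ => (∅ : Finset S)
  | n + 1 => P.stepR (P.daR n)

/-- The outcome of the student-proposing Deferred Acceptance algorithm:
iterate rounds until no rejection occurs (which happens within
`|I|·|S| + 1` rounds); each student is matched to the school holding her. -/
noncomputable def DA (P : SchoolChoice I S) : I → S :=
  P.propose (P.daR (Fintype.card I * Fintype.card S + 1))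

/-- A matching `ν` is stable-dominating if every student weakly prefers
`ν` to the DA outcome. -/
def StableDominating (P : SchoolChoice I S) (ν : I → S) : Prop :=
  P.IsMatching ν ∧ ∀ i : I, P.rk i (ν i) ≤ P.rk i (P.DA i)

/-- Student `i` is unimprovable: every stable-dominating matching assigns `i`
to her DA school. -/
def Unimprovable (P : SchoolChoice I S) (i : I) : Prop :=
  ∀ ν : I → S, P.StableDominating ν → ν i = P.DA i

/-- Edge of the envy digraph `G^DA(P)`: `i` prefers `j`'s DA school to her own. -/
def Envy (P : SchoolChoice I S) (i j : I) : Prop :=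
  P.rk i (P.DA j) < P.rk i (P.DA i)

/-- Student `i` lies on a directed cycle of the envy digraph `G^DA(P)`. -/
def OnCycle (P : SchoolChoice I S) (i : I) : Prop :=
  ∃ (m : ℕ) (c : ℕ → I), 0 < m ∧ c 0 = i ∧ c m = i ∧
    ∀ k < m, P.Envy (c k) (c (k + 1))

/-- Student `i` desires school `s` in matching `μ`. -/
def Desires (P : SchoolChoice I S) (μ : I → S) (i : I) (s : S) : Prop :=
  P.rk i s < P.rk i (μ i)

/-- `μ` is non-wasteful: every desired school is filled to quota. -/
def NonWasteful (P : SchoolChoice I S) (μ : I → S) : Prop :=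
  ∀ s : S, (∃ i : I, P.Desires μ i s) →
    (Finset.univ.filter fun i => μ i = s).card = P.quota s

/-- `μ` is stable: a non-wasteful matching with no priority violations. -/
def Stable (P : SchoolChoice I S) (μ : I → S) : Prop :=
  P.IsMatching μ ∧ P.NonWasteful μ ∧
    ¬ ∃ (i j : I) (s : S), P.Desires μ i s ∧ μ j = s ∧ P.prio s i < P.prio s j

/-- `μ` Pareto-dominates `ν`. -/
def ParetoDominates (P : SchoolChoice I S) (μ ν : I → S) : Prop :=
  (∀ i : I, P.rk i (μ i) ≤ P.rk i (ν i)) ∧ ∃ i : I, P.rk i (μ i) < P.rk i (ν i)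

/-- `μ` is a Pareto-efficient matching. -/
def ParetoEfficient (P : SchoolChoice I S) (μ : I → S) : Prop :=
  P.IsMatching μ ∧ ∀ ν : I → S, P.IsMatching ν → ¬ P.ParetoDominates ν μ

end SchoolChoice

/-!
In the example, student `a` ranks school `cyclicMatching n a` (that is `a + 1`, or `0` for
the last student) in position `a + 1`, and the only schools she ranks higher are `1, …, a`.
By induction on `a`, in any matching the students below `a` already fill `1, …, a`, so a
matching in which every student `a` gets rank at most `a + 1` is the cyclic matching; the same
induction, with stability in place of the rank bound, shows that the cyclic matching is the
only stable matching. Deferred acceptance always produces a stable matching, hence the cyclic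
one, with rank sum `1 + ⋯ + n`, and any stable-dominating or Pareto-improving matching meets
the rank bound. The diagonal matching `a ↦ a` gives every student except `0` her first choice
and student `0` her second, for a rank sum of `n + 1`.
-/

namespace SchoolChoice

open Finset

variable {I S : Type} [Fintype I] [Fintype S] [DecidableEq I] [DecidableEq S]

section DeferredAcceptance

variable (P : SchoolChoice I S)

theorem not_rejectsAt_nullSchool (R : I → Finset S) (i : I) :
    ¬ P.rejectsAt R P.nullSchool i := by
  rintro ⟨-, hq⟩
  have hsub : (univ.filter fun j => P.propose R j = P.nullSchool ∧
      P.prio P.nullSchool j < P.prio P.nullSchool i) ⊆ univ.erase i :=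
    fun j hj => mem_erase.mpr ⟨by rintro rfl; simp at hj, mem_univ j⟩
  have := card_le_card hsub
  rw [card_erase_of_mem (mem_univ i), card_univ, ← P.quota_null] at this
  have := P.quota_pos P.nullSchool
  omega

theorem mem_daR_succ_iff {t : ℕ} {i : I} {s : S} :
    s ∈ P.daR (t + 1) i ↔ s ∈ P.daR t i ∨ P.rejectsAt (P.daR t) s i := by
  simp [daR, stepR]

theorem nullSchool_not_mem_daR (t : ℕ) (i : I) : P.nullSchool ∉ P.daR t i := by
  induction t with
  | zero => simp [daR]
  | succ t ih => simpa [mem_daR_succ_iff, ih] using P.not_rejectsAt_nullSchool _ i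

theorem daR_mono : Monotone P.daR :=
  monotone_nat_of_le_succ fun _ _ => subset_union_left

theorem propose_daR_not_mem (t : ℕ) (i : I) : P.propose (P.daR t) i ∉ P.daR t i := by
  have h : (univ \ P.daR t i).Nonempty :=
    ⟨P.nullSchool, by simpa using P.nullSchool_not_mem_daR t i⟩
  rw [propose, dif_pos h]
  simpa using (exists_min_image _ (P.rk i) h).choose_spec.1

theorem rk_propose_daR_le {t : ℕ} {i : I} {s : S} (hs : s ∉ P.daR t i) :
    P.rk i (P.propose (P.daR t) i) ≤ P.rk i s := by
  have h : (univ \ P.daR t i).Nonempty := ⟨s, by simpa using hs⟩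
  rw [propose, dif_pos h]
  exact (exists_min_image _ (P.rk i) h).choose_spec.2 s (by simpa using hs)

theorem propose_daR_succ {t : ℕ} {i : I}
    (h : P.propose (P.daR t) i ∉ P.daR (t + 1) i) :
    P.propose (P.daR (t + 1)) i = P.propose (P.daR t) i :=
  P.rk_inj i <| le_antisymm (P.rk_propose_daR_le h) <| P.rk_propose_daR_le fun hmem =>
    P.propose_daR_not_mem (t + 1) i (P.daR_mono t.le_succ i hmem)

noncomputable def strongerApplicants (R : I → Finset S) (s : S) (i : I) : Finset I :=
  univ.filter fun j => P.propose R j = s ∧ P.prio s j < P.prio s i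

theorem rejectsAt_iff {R : I → Finset S} {s : S} {i : I} :
    P.rejectsAt R s i ↔ P.propose R i = s ∧ P.quota s ≤ #(P.strongerApplicants R s i) :=
  Iff.rfl

open scoped Classical in
/-- Whoever school `s` outranks by a full quota of applicants stays outranked in the next
round: if some of those applicants are rejected, the one of highest priority among them was
outranked by a full quota of applicants who are kept. -/
theorem quota_le_card_strongerApplicants_succ {t : ℕ} {s : S} {i : I}
    (h : P.quota s ≤ #(P.strongerApplicants (P.daR t) s i)) :
    P.quota s ≤ #(P.strongerApplicants (P.daR (t + 1)) s i) := by
  set A := P.strongerApplicants (P.daR t) s i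
  set kept := A.filter fun j => ¬ P.rejectsAt (P.daR t) s j
  have hkept : kept ⊆ P.strongerApplicants (P.daR (t + 1)) s i := by
    intro j hj
    simp only [kept, A, strongerApplicants, mem_filter, mem_univ, true_and] at hj ⊢
    obtain ⟨⟨hjs, hji⟩, hnrej⟩ := hj
    refine ⟨?_, hji⟩
    rw [P.propose_daR_succ, hjs]
    rw [mem_daR_succ_iff, hjs]
    rintro (hmem | hrej)
    · exact P.propose_daR_not_mem t j (hjs ▸ hmem)
    · exact hnrej hrej
  refine le_trans ?_ (card_le_card hkept)
  by_cases hrej : (A.filter fun j => P.rejectsAt (P.daR t) s j).Nonempty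
  · obtain ⟨j, hj, hjmin⟩ := exists_min_image _ (P.prio s) hrej
    obtain ⟨hjA, hjrej⟩ := mem_filter.mp hj
    refine (P.rejectsAt_iff.mp hjrej).2.trans (card_le_card fun k hk => ?_)
    obtain ⟨hks, hkj⟩ := (mem_filter.mp hk).2
    have hkA : k ∈ A := mem_filter.mpr ⟨mem_univ k, hks, hkj.trans (mem_filter.mp hjA).2.2⟩
    exact mem_filter.mpr
      ⟨hkA, fun hkrej => (hjmin k (mem_filter.mpr ⟨hkA, hkrej⟩)).not_gt hkj⟩
  · rw [not_nonempty_iff_eq_empty, filter_eq_empty_iff] at hrej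
    rwa [show kept = A from filter_true_of_mem hrej]

theorem quota_le_card_strongerApplicants {t : ℕ} {i : I} {s : S} (hs : s ∈ P.daR t i) :
    P.quota s ≤ #(P.strongerApplicants (P.daR t) s i) := by
  induction t with
  | zero => simp [daR] at hs
  | succ t ih =>
    apply P.quota_le_card_strongerApplicants_succ
    rcases P.mem_daR_succ_iff.mp hs with hs | hrej
    · exact ih hs
    · exact (P.rejectsAt_iff.mp hrej).2

theorem daR_eq_of_succ_eq {u : ℕ} (h : P.daR (u + 1) = P.daR u) {v : ℕ} (huv : u ≤ v) :
    P.daR v = P.daR u := by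
  induction v, huv using Nat.le_induction with
  | base => rfl
  | succ v _ ih =>
    change P.stepR (P.daR v) = P.daR u
    rw [ih]
    exact h

theorem le_sum_card_daR {t : ℕ} (h : ∀ u < t, P.daR (u + 1) ≠ P.daR u) :
    t ≤ ∑ i, #(P.daR t i) := by
  induction t with
  | zero => exact Nat.zero_le _
  | succ t ih =>
    obtain ⟨i, hi⟩ := Function.ne_iff.mp (h t t.lt_succ_self)
    have hlt : ∑ i, #(P.daR t i) < ∑ i, #(P.daR (t + 1) i) :=
      sum_lt_sum (fun j _ => card_le_card (P.daR_mono t.le_succ j))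
        ⟨i, mem_univ i, card_lt_card ((P.daR_mono t.le_succ i).ssubset_of_ne hi.symm)⟩
    have := ih fun u hu => h u (hu.trans t.lt_succ_self)
    omega

/-- Each round without a fixpoint adds a rejection, and there are at most `|I|·|S|` of them. -/
theorem daR_fixed_at_DA_round :
    P.daR (Fintype.card I * Fintype.card S + 1 + 1) =
      P.daR (Fintype.card I * Fintype.card S + 1) := by
  set N := Fintype.card I * Fintype.card S + 1
  by_contra hN
  have hbound : ∑ i, #(P.daR (N + 1) i) ≤ Fintype.card I * Fintype.card S := by
    calc ∑ i, #(P.daR (N + 1) i) ≤ ∑ _i : I, Fintype.card S :=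
          sum_le_sum fun i _ => card_le_univ _
      _ = Fintype.card I * Fintype.card S := by simp
  have := P.le_sum_card_daR (t := N + 1) fun u hu hfix =>
    hN ((P.daR_eq_of_succ_eq hfix (by omega)).trans (P.daR_eq_of_succ_eq hfix (by omega)).symm)
  omega

theorem card_strongerApplicants_DA_lt {i : I} {s : S} (hi : P.DA i = s) :
    #(P.strongerApplicants (P.daR (Fintype.card I * Fintype.card S + 1)) s i) < P.quota s := by
  by_contra! hq
  have hmem := P.mem_daR_succ_iff.mpr (Or.inr (P.rejectsAt_iff.mpr ⟨hi, hq⟩))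
  rw [daR_fixed_at_DA_round, ← hi] at hmem
  exact P.propose_daR_not_mem _ i hmem

theorem mem_daR_of_desires_DA {i : I} {s : S} (h : P.Desires P.DA i s) :
    s ∈ P.daR (Fintype.card I * Fintype.card S + 1) i := by
  by_contra hs
  exact (P.rk_propose_daR_le hs).not_gt h

theorem isMatching_DA : P.IsMatching P.DA := by
  intro s
  by_contra! hq
  have hne : (univ.filter fun i => P.DA i = s).Nonempty := card_pos.mp (by
    have := P.quota_pos s
    omega)
  -- the holder of `s` with the lowest priority would be rejected
  obtain ⟨j, hj, hjmax⟩ := exists_max_image _ (P.prio s) hne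
  have hsub : (univ.filter fun i => P.DA i = s).erase j ⊆
      P.strongerApplicants (P.daR (Fintype.card I * Fintype.card S + 1)) s j := by
    intro k hk
    obtain ⟨hkj, hk⟩ := mem_erase.mp hk
    refine mem_filter.mpr ⟨mem_univ k, (mem_filter.mp hk).2, ?_⟩
    exact (hjmax k hk).lt_of_ne fun h => hkj (P.prio_inj s h)
  have := card_le_card hsub
  rw [card_erase_of_mem hj] at this
  have := P.card_strongerApplicants_DA_lt (mem_filter.mp hj).2
  omega

theorem DA_stable : P.Stable P.DA := by
  refine ⟨P.isMatching_DA, fun s ⟨i, hi⟩ => le_antisymm (P.isMatching_DA s) ?_, ?_⟩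
  · exact (P.quota_le_card_strongerApplicants (P.mem_daR_of_desires_DA hi)).trans
      (card_le_card fun k hk => mem_filter.mpr ⟨mem_univ k, (mem_filter.mp hk).2.1⟩)
  · rintro ⟨i, j, s, hi, hj, hij⟩
    refine (P.card_strongerApplicants_DA_lt hj).not_ge
      ((P.quota_le_card_strongerApplicants (P.mem_daR_of_desires_DA hi)).trans
        (card_le_card fun k hk => mem_filter.mpr
          ⟨mem_univ k, (mem_filter.mp hk).2.1, (mem_filter.mp hk).2.2.trans hij⟩))

end DeferredAcceptance

variable {P : SchoolChoice I S}

theorem IsMatching.eq_of_eq {μ : I → S} (hμ : P.IsMatching μ) {s : S} (hs : P.quota s = 1)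
    {i j : I} (hi : μ i = s) (hj : μ j = s) : i = j :=
  card_le_one.mp (hs ▸ hμ s) i (by simpa using hi) j (by simpa using hj)

theorem paretoEfficient_of_forall_rk_le_imp_eq {μ : I → S} (hμ : P.IsMatching μ)
    (h : ∀ ν, P.IsMatching ν → (∀ i, P.rk i (ν i) ≤ P.rk i (μ i)) → ν = μ) :
    P.ParetoEfficient μ := by
  refine ⟨hμ, fun ν hν ⟨hle, i, hi⟩ => ?_⟩
  rw [h ν hν hle] at hi
  exact hi.false

theorem isMatching_of_injective {μ : I → S} (hμ : Function.Injective μ) : P.IsMatching μ :=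
  fun s => (card_le_one.mpr fun _ hi _ hj =>
    hμ ((mem_filter.mp hi).2.trans (mem_filter.mp hj).2.symm)).trans (P.quota_pos s)

end SchoolChoice

namespace RankInefficiency

open Finset SchoolChoice

/-- Student `0` ranks the schools `1 ≻ 0 ≻ 2 ≻ ⋯ ≻ n-1`, student `a ≥ 1` ranks them
`a ≻ a-1 ≻ ⋯ ≻ 1 ≻ a+1 ≻ ⋯ ≻ n-1 ≻ 0`; school `n` is the null school. -/
def exampleRank (n a b : ℕ) : ℕ :=
  if b = n then n + 1
  else if a = 0 then (if b = 1 then 1 else if b = 0 then 2 else b + 1)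
  else if b = 0 then n
  else if b ≤ a then a + 1 - b
  else b

/-- School `s` gives top priority to student `s - 1` and otherwise prefers lower indices. -/
def examplePrio (s i : ℕ) : ℕ :=
  if i + 1 = s then 0 else i + 1

def exampleProblem (n : ℕ) (hn : 2 ≤ n) : SchoolChoice (Fin n) (Fin (n + 1)) where
  nullSchool := Fin.last n
  quota s := if (s : ℕ) = n then n else 1
  rk a b := exampleRank n a b
  prio s i := examplePrio s i
  quota_pos s := by split <;> omega
  quota_null := by simp
  rk_inj i b c h := by
    have := b.isLt; have := c.isLt
    simp only [exampleRank] at h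
    ext
    split_ifs at h <;> omega
  rk_mem i s := by
    have := s.isLt
    simp only [exampleRank, mem_Icc, Fintype.card_fin]
    split_ifs <;> omega
  prio_inj s i j h := by
    simp only [examplePrio] at h
    ext
    split_ifs at h <;> omega

/-- The outcome of deferred acceptance in the example. -/
def cyclicMatching (n : ℕ) (a : Fin n) : Fin (n + 1) :=
  if (a : ℕ) + 1 = n then 0 else a.succ

variable {n : ℕ} (hn : 2 ≤ n)

theorem val_cyclicMatching (a : Fin n) :
    (cyclicMatching n a : ℕ) = if (a : ℕ) + 1 = n then (0 : ℕ) else (a : ℕ) + 1 := by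
  unfold cyclicMatching
  split_ifs <;> simp

theorem cyclicMatching_injective : Function.Injective (cyclicMatching n) := by
  intro a b h
  have := congrArg Fin.val h
  simp only [val_cyclicMatching] at this
  ext
  split_ifs at this <;> omega

theorem quota_exampleProblem {s : Fin (n + 1)} (hs : (s : ℕ) ≠ n) :
    (exampleProblem n hn).quota s = 1 :=
  if_neg hs

theorem rk_cyclicMatching (a : Fin n) :
    (exampleProblem n hn).rk a (cyclicMatching n a) = a + 1 := by
  have := a.isLt
  change exampleRank n a (cyclicMatching n a) = a + 1
  rw [exampleRank, val_cyclicMatching]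
  split_ifs <;> first | contradiction | omega

theorem rk_le_succ_iff {a : Fin n} {b : Fin (n + 1)} :
    (exampleProblem n hn).rk a b ≤ a + 1 ↔
      (1 ≤ (b : ℕ) ∧ (b : ℕ) ≤ a) ∨ b = cyclicMatching n a := by
  have := a.isLt; have := b.isLt
  change exampleRank n a b ≤ a + 1 ↔ _
  rw [exampleRank, Fin.ext_iff, val_cyclicMatching]
  split_ifs <;> omega

theorem prio_cyclicMatching_lt {a j : Fin n} (h : a < j) :
    (exampleProblem n hn).prio (cyclicMatching n a) a <
      (exampleProblem n hn).prio (cyclicMatching n a) j := by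
  have := j.isLt
  change examplePrio (cyclicMatching n a) a < examplePrio (cyclicMatching n a) j
  rw [examplePrio, examplePrio, val_cyclicMatching]
  rw [Fin.lt_def] at h
  split_ifs <;> omega

theorem not_mem_lower_schools {μ : Fin n → Fin (n + 1)}
    (hμ : (exampleProblem n hn).IsMatching μ) {a : Fin n}
    (hlow : ∀ c < a, μ c = cyclicMatching n c) :
    ¬ (1 ≤ (μ a : ℕ) ∧ (μ a : ℕ) ≤ a) := by
  rintro ⟨h1, h2⟩
  set c : Fin n := ⟨(μ a : ℕ) - 1, by omega⟩
  have hc : c < a := by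
    rw [Fin.lt_def]
    dsimp only [c]
    omega
  have hμc : μ c = μ a := by
    ext
    rw [hlow c hc, val_cyclicMatching]
    dsimp only [c]
    split_ifs <;> omega
  exact hc.ne (hμ.eq_of_eq (quota_exampleProblem hn (by omega)) hμc rfl)

theorem eq_cyclicMatching_of_rk_le {μ : Fin n → Fin (n + 1)}
    (hμ : (exampleProblem n hn).IsMatching μ)
    (hrk : ∀ a, (exampleProblem n hn).rk a (μ a) ≤ a + 1) : μ = cyclicMatching n := by
  funext a
  induction a using WellFoundedLT.induction with
  | _ a ih =>
    exact ((rk_le_succ_iff hn).mp (hrk a)).resolve_left (not_mem_lower_schools hn hμ ih)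

/-- Induction on `a`: if `a` is not at `cyclicMatching n a`, she desires it, and its holder
either sits below `a` (impossible, by injectivity) or above `a`, where `a` has priority. -/
theorem eq_cyclicMatching_of_stable {μ : Fin n → Fin (n + 1)}
    (hμ : (exampleProblem n hn).Stable μ) : μ = cyclicMatching n := by
  obtain ⟨hmatch, hfull, hblock⟩ := hμ
  funext a
  induction a using WellFoundedLT.induction with
  | _ a ih =>
    by_contra hne
    have hdes : (exampleProblem n hn).Desires μ a (cyclicMatching n a) := by
      have := (rk_le_succ_iff hn).not.mpr
        (not_or.mpr ⟨not_mem_lower_schools hn hmatch ih, hne⟩)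
      rw [Desires, rk_cyclicMatching]
      omega
    obtain ⟨j, hj⟩ : ∃ j, μ j = cyclicMatching n a := by
      have hcard := hfull _ ⟨a, hdes⟩
      have := (exampleProblem n hn).quota_pos (cyclicMatching n a)
      obtain ⟨j, hj⟩ := card_pos.mp (hcard ▸ this)
      exact ⟨j, (mem_filter.mp hj).2⟩
    rcases lt_trichotomy j a with hja | rfl | haj
    · exact hja.ne (cyclicMatching_injective ((ih j hja).symm.trans hj))
    · exact hne hj
    · exact hblock ⟨a, j, _, hdes, hj, prio_cyclicMatching_lt hn haj⟩

theorem DA_exampleProblem : (exampleProblem n hn).DA = cyclicMatching n :=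
  eq_cyclicMatching_of_stable hn (exampleProblem n hn).DA_stable

theorem sum_rk_eq_of_rk_le {ν : Fin n → Fin (n + 1)}
    (hν : (exampleProblem n hn).IsMatching ν)
    (hrk : ∀ a, (exampleProblem n hn).rk a (ν a) ≤ a + 1) :
    ∑ a, (exampleProblem n hn).rk a (ν a) = n * (n + 1) / 2 := by
  rw [eq_cyclicMatching_of_rk_le hn hν hrk]
  simp only [rk_cyclicMatching]
  have h := sum_range_succ' (fun i => i) n
  rw [add_zero, sum_range_id, Nat.add_sub_cancel, mul_comm] at h
  rw [Fin.sum_univ_eq_sum_range (· + 1), ← h]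

theorem paretoEfficient_cyclicMatching :
    (exampleProblem n hn).ParetoEfficient (cyclicMatching n) := by
  refine paretoEfficient_of_forall_rk_le_imp_eq ?_ fun ν hν hle =>
    eq_cyclicMatching_of_rk_le hn hν fun a => (hle a).trans (rk_cyclicMatching hn a).le
  rw [← DA_exampleProblem hn]
  exact (exampleProblem n hn).isMatching_DA

theorem rk_castSucc (a : Fin n) :
    (exampleProblem n hn).rk a a.castSucc = if (a : ℕ) = 0 then 2 else 1 := by
  have := a.isLt
  change exampleRank n a a = _
  rw [exampleRank]
  split_ifs <;> omega

theorem eq_castSucc_of_rk_le {a : Fin n} {b : Fin (n + 1)}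
    (h : (exampleProblem n hn).rk a b ≤ (exampleProblem n hn).rk a a.castSucc) :
    b = a.castSucc ∨ (a : ℕ) = 0 ∧ (b : ℕ) = 1 := by
  have := b.isLt
  rw [rk_castSucc] at h
  change exampleRank n a b ≤ _ at h
  rw [exampleRank] at h
  rw [Fin.ext_iff, Fin.val_castSucc]
  split_ifs at h <;> omega

/-- Everyone but student `0` gets her first choice, and student `0`'s first choice is taken
by student `1`. -/
theorem paretoEfficient_castSucc :
    (exampleProblem n hn).ParetoEfficient Fin.castSucc := by
  refine paretoEfficient_of_forall_rk_le_imp_eq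
    (isMatching_of_injective (Fin.castSucc_injective n)) fun ν hν hle => funext fun a => ?_
  refine (eq_castSucc_of_rk_le hn (hle a)).resolve_right fun ⟨ha, hνa⟩ => ?_
  set one : Fin n := ⟨1, by omega⟩
  have hone : ν one = one.castSucc :=
    (eq_castSucc_of_rk_le hn (hle one)).resolve_right fun h => absurd h.1 one_ne_zero
  have hsame : ν one = ν a := Fin.ext (by rw [hone, hνa]; rfl)
  have := hν.eq_of_eq (quota_exampleProblem hn (by omega)) hsame rfl
  exact absurd (congrArg Fin.val this) (by simp [one, ha])

theorem sum_rk_castSucc : ∑ a, (exampleProblem n hn).rk a a.castSucc = n + 1 := by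
  obtain ⟨m, rfl⟩ : ∃ m, n = m + 1 := ⟨n - 1, by omega⟩
  simp only [Fin.sum_univ_succ, rk_castSucc, Fin.val_eq_zero_iff, Fin.succ_ne_zero, ↓reduceIte,
    sum_const, card_univ, Fintype.card_fin, smul_eq_mul, mul_one]
  omega

end RankInefficiency

open RankInefficiency

/-- For every `n ≥ 2` there is a school choice problem with `n`
students and `n` (ordinary) schools of quota 1, every student ranking all `n`
schools above the null school, such that: (i) `DA(P)` is the unique stable
matching and is Pareto-efficient; (ii) `Σ_i rk_i(DA_i(P)) = n(n+1)/2`; (iii)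
some Pareto-efficient matching `μ` has `Σ_i rk_i(μ i) = n + 1`.  Consequently
every stable-dominating matching `ν` has `Σ_i rk_i(ν i) = n(n+1)/2`, so the
rank-inefficiency ratio of any stable-dominating and Pareto-efficient
mechanism attains `n/2`. -/
theorem rank_inefficiency_lower_bound_example (n : ℕ) (hn : 2 ≤ n) :
    ∃ P : SchoolChoice (Fin n) (Fin (n + 1)),
      P.nullSchool = Fin.last n ∧
      (∀ s : Fin (n + 1), s ≠ P.nullSchool → P.quota s = 1) ∧
      (∀ i : Fin n, P.rk i P.nullSchool = n + 1) ∧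
      -- (i) DA is the unique stable matching and is Pareto-efficient
      P.Stable P.DA ∧
      (∀ μ : Fin n → Fin (n + 1), P.Stable μ → μ = P.DA) ∧
      P.ParetoEfficient P.DA ∧
      -- (ii) the sum of ranks under DA is n(n+1)/2
      (∑ i : Fin n, P.rk i (P.DA i)) = n * (n + 1) / 2 ∧
      -- (iii) a Pareto-efficient matching with rank sum n+1
      (∃ μ : Fin n → Fin (n + 1), P.ParetoEfficient μ ∧
        (∑ i : Fin n, P.rk i (μ i)) = n + 1) ∧
      -- consequently, every stable-dominating matching has rank sum n(n+1)/2
      (∀ ν : Fin n → Fin (n + 1), P.StableDominating ν →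
        (∑ i : Fin n, P.rk i (ν i)) = n * (n + 1) / 2) := by
  have hDA := DA_exampleProblem hn
  have hrk_DA (a : Fin n) : (exampleProblem n hn).rk a ((exampleProblem n hn).DA a) = a + 1 :=
    hDA ▸ rk_cyclicMatching hn a
  refine ⟨exampleProblem n hn, rfl, fun s hs => quota_exampleProblem hn (Fin.val_ne_of_ne hs),
    fun i => by simp [exampleProblem, exampleRank], (exampleProblem n hn).DA_stable,
    fun μ hμ => (eq_cyclicMatching_of_stable hn hμ).trans hDA.symm,
    hDA ▸ paretoEfficient_cyclicMatching hn,
    sum_rk_eq_of_rk_le hn (exampleProblem n hn).isMatching_DA fun a => (hrk_DA a).le,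
    ⟨Fin.castSucc, paretoEfficient_castSucc hn, sum_rk_castSucc hn⟩,
    fun ν hν => sum_rk_eq_of_rk_le hn hν.1 fun a => (hν.2 a).trans (hrk_DA a).le⟩
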